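/- arXiv:2101.05628 — 3 statements merged into one kernel-verified Lean document; each statement's English description precedes it below -/
import Mathlib

section
/- The disutility function U is convex on the basic feasible set S₀; that is, ConvexOn ℝ S₀ U holds for the explicit function U(α) = θ_D·D(α)/D_MAX + θ_E·E(α)/E_MAX + θ_P·P(α)/P_MAX defined from the delay, energy and payment functions of the edge-cloud offloading model. -/
open Finset

noncomputable section

/-- Total offloading fraction `s(α) = Σ_j α_j`. -/
def sTot {N : ℕ} (α : Fin N → ℝ) : ℝ := ∑ j, α j

/-- Local computing delay contribution. -/
def Gfun {N : ℕ} (lam c f : ℝ) (α : Fin N → ℝ) : ℝ :=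
  (1 - sTot α) * c / (f - (1 - sTot α) * lam * c)

/-- Wireless transmission delay contribution. -/
def Hfun {N : ℕ} (lam z r Sbar : ℝ) (α : Fin N → ℝ) : ℝ :=
  sTot α * (lam * Sbar * sTot α / (2 * (1 - lam * z * sTot α / r)) + z / r)

/-- Expected total delay. -/
def Dfun {N : ℕ} (Nc : ℕ) (lam c z r f Sbar : ℝ) (fOSP w K : Fin N → ℝ)
    (α : Fin N → ℝ) : ℝ :=
  Gfun lam c f α + Hfun lam z r Sbar α + (∑ j, α j * w j) +
    (∑ j ∈ Finset.univ.filter (fun j : Fin N => (j : ℕ) < Nc), α j * c / fOSP j) +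
    (∑ j ∈ Finset.univ.filter (fun j : Fin N => Nc ≤ (j : ℕ)),
      α j * c / (fOSP j - K j - α j * lam * c))

/-- Expected energy consumption. -/
def Efun {N : ℕ} (lam c z r f Sbar εloc εtx : ℝ) (α : Fin N → ℝ) : ℝ :=
  εloc * Gfun lam c f α + εtx * Hfun lam z r Sbar α

/-- Expected payment. -/
def Pfun {N : ℕ} (lam c : ℝ) (price : Fin N → ℝ) (α : Fin N → ℝ) : ℝ :=
  ∑ j, α j * price j * c * lam

/-- Basic feasible set `S₀`. -/
def S0 {N : ℕ} (Nc : ℕ) (lam c z r f : ℝ) (fOSP K : Fin N → ℝ) :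
    Set (Fin N → ℝ) :=
  {α | (∀ j, 0 ≤ α j) ∧ sTot α ≤ 1 ∧ (1 - sTot α) * lam * c < f ∧
    lam * z * sTot α < r ∧ ∀ j : Fin N, Nc ≤ (j : ℕ) → K j + α j * lam * c < fOSP j}

/-- The disutility function `U`. -/
def Ufun {N : ℕ} (Nc : ℕ) (lam c z r f Sbar εloc εtx : ℝ) (fOSP w K price : Fin N → ℝ)
    (θD θE θP DMAX EMAX PMAX : ℝ) (α : Fin N → ℝ) : ℝ :=
  θD * Dfun Nc lam c z r f Sbar fOSP w K α / DMAX +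
    θE * Efun lam c z r f Sbar εloc εtx α / EMAX +
    θP * Pfun lam c price α / PMAX

/-!
Every term of `U` is a nonnegative multiple of a function that is convex on `S₀`. Besides linear
terms there are two shapes: `t / (A - k t)` with `A ≥ 0`, `k > 0` (local computing and each edge
OSP), which equals `(A / k) / (A - k t) - 1 / k`, and the queueing term `s² / (1 - λ z s / r)` of
the transmission delay. Both are quadratic-over-linear functions `L² / M` of affine `L`, `M`,
whose convexity on `{M > 0}` is the two-term Sedrakyan inequality
`(a p + b q)² / (a m + b n) ≤ a p² / m + b q² / n`. Finally `S₀` is cut out by affine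
inequalities, hence convex.
-/

section Affine

variable {E : Type*} [AddCommGroup E] [Module ℝ E]

theorem sq_add_div_add_le {a b p q m n : ℝ} (ha : 0 ≤ a) (hb : 0 ≤ b) (hm : 0 < m) (hn : 0 < n) :
    (a * p + b * q) ^ 2 / (a * m + b * n) ≤ a * (p ^ 2 / m) + b * (q ^ 2 / n) := by
  rcases (by positivity : 0 ≤ a * m + b * n).eq_or_lt with hD | hD
  · rw [← hD, div_zero]
    positivity
  have hgap : (a * (p ^ 2 / m) + b * (q ^ 2 / n)) * (a * m + b * n) - (a * p + b * q) ^ 2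
      = a * b * (p * n - q * m) ^ 2 / (m * n) := by
    field_simp
    ring
  rw [div_le_iff₀ hD]
  linarith [(by positivity : 0 ≤ a * b * (p * n - q * m) ^ 2 / (m * n))]

theorem convexOn_sq_div_affine (L M : E →ᵃ[ℝ] ℝ) :
    ConvexOn ℝ {x | 0 < M x} fun x => L x ^ 2 / M x := by
  refine ⟨(convex_Ioi 0).affine_preimage M, fun x hx y hy a b ha hb hab => ?_⟩
  simp only [Convex.combo_affine_apply hab, smul_eq_mul]
  exact sq_add_div_add_le ha hb hx hy

theorem convexOn_div_sub_mul_affine (L : E →ᵃ[ℝ] ℝ) {A k : ℝ} (hA : 0 ≤ A) (hk : 0 < k) :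
    ConvexOn ℝ {x | k * L x < A} fun x => L x / (A - k * L x) := by
  let M : E →ᵃ[ℝ] ℝ := AffineMap.const ℝ E A - k • L
  have hM : ∀ x, M x = A - k * L x := fun x => by simp [M]
  have hdom : {x | k * L x < A} = {x | 0 < M x} := by ext x; simp [hM]
  rw [hdom]
  -- `L / (A - k L) = (A / k) * 1 ^ 2 / (A - k L) - 1 / k`
  refine (((convexOn_sq_div_affine (AffineMap.const ℝ E 1) M).smul (div_nonneg hA hk.le)).add
    (convexOn_const (-1 / k) ((convex_Ioi 0).affine_preimage M))).congr fun x hx => ?_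
  have hne : A - k * L x ≠ 0 := by rw [← hM]; exact hx.ne'
  simp only [Pi.add_apply, smul_eq_mul, AffineMap.const_apply, hM]
  field_simp
  ring

theorem convexOn_finset_sum {ι : Type*} {s : Set E} (hs : Convex ℝ s) (t : Finset ι)
    {g : ι → E → ℝ} (hg : ∀ i ∈ t, ConvexOn ℝ s (g i)) :
    ConvexOn ℝ s fun x => ∑ i ∈ t, g i x := by
  simpa only [Finset.sum_fn] using
    Finset.sum_induction g (ConvexOn ℝ s) (fun _ _ => ConvexOn.add) (convexOn_const 0 hs) hg

end Affine

theorem convexOn_sum_coord_mul {ι : Type*} {s : Set (ι → ℝ)} (hs : Convex ℝ s) (t : Finset ι)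
    (b : ι → ℝ) : ConvexOn ℝ s fun α => ∑ j ∈ t, α j * b j :=
  ((∑ j ∈ t, b j • LinearMap.proj j : (ι → ℝ) →ₗ[ℝ] ℝ).convexOn hs).congr fun α _ => by
    simp [mul_comm]

section Offloading

variable {N : ℕ}

def sTotLinearMap (N : ℕ) : (Fin N → ℝ) →ₗ[ℝ] ℝ := ∑ j, LinearMap.proj j

@[simp]
theorem sTotLinearMap_apply (α : Fin N → ℝ) : sTotLinearMap N α = sTot α := by
  simp [sTotLinearMap, sTot]

theorem convexOn_Gfun {lam c f : ℝ} (hlam : 0 < lam) (hf : 0 ≤ f) :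
    ConvexOn ℝ {α : Fin N → ℝ | (1 - sTot α) * lam * c < f} (Gfun lam c f) := by
  let L : (Fin N → ℝ) →ᵃ[ℝ] ℝ := c • (AffineMap.const ℝ _ 1 - (sTotLinearMap N).toAffineMap)
  have hL : ∀ α, L α = c * (1 - sTot α) := fun α => by simp [L]
  have hdom : {α : Fin N → ℝ | (1 - sTot α) * lam * c < f} = {α | lam * L α < f} := by
    ext α; simp only [Set.mem_ofPred_eq, hL]; ring_nf
  rw [hdom]
  exact (convexOn_div_sub_mul_affine L hf hlam).congr fun α _ => by simp only [Gfun, hL]; ring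

theorem convexOn_Hfun {lam z r Sbar : ℝ} (hlam : 0 ≤ lam) (hSbar : 0 ≤ Sbar) (hr : 0 < r) :
    ConvexOn ℝ {α : Fin N → ℝ | lam * z * sTot α < r} (Hfun lam z r Sbar) := by
  let M : (Fin N → ℝ) →ᵃ[ℝ] ℝ :=
    AffineMap.const ℝ _ 1 - (lam * z / r) • (sTotLinearMap N).toAffineMap
  have hM : ∀ α, M α = 1 - lam * z * sTot α / r := fun α => by simp [M]; ring
  have hdom : {α : Fin N → ℝ | lam * z * sTot α < r} = {α | 0 < M α} := by
    ext α; simp [hM, div_lt_one hr]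
  rw [hdom]
  -- `H = (λ S̄ / 2) • s² / (1 - λ z s / r) + (z / r) • s`
  refine (((convexOn_sq_div_affine (sTotLinearMap N).toAffineMap M).smul
    (by positivity : 0 ≤ lam * Sbar / 2)).add
    (((z / r) • sTotLinearMap N).convexOn ((convex_Ioi 0).affine_preimage M))).congr
    fun α _ => ?_
  simp only [Hfun, div_mul_eq_div_div, Pi.add_apply, smul_eq_mul, hM, LinearMap.smul_apply,
    LinearMap.coe_toAffineMap, sTotLinearMap_apply]
  ring

theorem convexOn_div_sub_apply {ι : Type*} (j : ι) {K F lam c : ℝ} (hlam : 0 < lam)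
    (hKF : K ≤ F) :
    ConvexOn ℝ {α : ι → ℝ | K + α j * lam * c < F} fun α => α j * c / (F - K - α j * lam * c) := by
  let L : (ι → ℝ) →ᵃ[ℝ] ℝ := c • (LinearMap.proj j).toAffineMap
  have hL : ∀ α, L α = c * α j := fun α => by simp [L]
  have hdom : {α : ι → ℝ | K + α j * lam * c < F} = {α | lam * L α < F - K} := by
    ext α; simp only [Set.mem_ofPred_eq, hL]; constructor <;> intro h <;> linarith
  rw [hdom]
  exact (convexOn_div_sub_mul_affine L (sub_nonneg.2 hKF) hlam).congr fun α _ => by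
    simp only [hL]; ring

theorem convex_S0 (Nc : ℕ) (lam c z r f : ℝ) (fOSP K : Fin N → ℝ) :
    Convex ℝ (S0 Nc lam c z r f fOSP K) := by
  rintro x ⟨hx₀, hx₁, hx₂, hx₃, hx₄⟩ y ⟨hy₀, hy₁, hy₂, hy₃, hy₄⟩ a b ha hb hab
  have hs : sTot (a • x + b • y) = a * sTot x + b * sTot y := by
    simp only [← sTotLinearMap_apply, map_add, map_smul, smul_eq_mul]
  refine ⟨fun j => ?_, ?_, ?_, ?_, fun j hj => ?_⟩
  · exact convex_Ici (0 : ℝ) (hx₀ j) (hy₀ j) ha hb hab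
  · rw [hs]
    exact convex_Iic (1 : ℝ) hx₁ hy₁ ha hb hab
  · refine lt_of_eq_of_lt ?_ (Set.mem_Iio.mp (convex_Iio f hx₂ hy₂ ha hb hab))
    rw [hs, smul_eq_mul, smul_eq_mul]
    linear_combination (lam * c) * hab.symm
  · rw [hs]
    refine lt_of_eq_of_lt ?_ (Set.mem_Iio.mp (convex_Iio r hx₃ hy₃ ha hb hab))
    simp only [smul_eq_mul]
    ring
  · refine lt_of_eq_of_lt ?_ (Set.mem_Iio.mp (convex_Iio _ (hx₄ j hj) (hy₄ j hj) ha hb hab))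
    simp only [Pi.add_apply, Pi.smul_apply, smul_eq_mul]
    linear_combination K j * hab.symm

theorem convexOn_Pfun (lam c : ℝ) {s : Set (Fin N → ℝ)} (hs : Convex ℝ s) (price : Fin N → ℝ) :
    ConvexOn ℝ s (Pfun lam c price) :=
  (convexOn_sum_coord_mul hs univ fun j => price j * c * lam).congr fun α _ => by
    simp only [Pfun, mul_assoc]

variable {Nc : ℕ} {lam c z r f Sbar : ℝ} {fOSP K : Fin N → ℝ}

theorem convexOn_Dfun (w : Fin N → ℝ) (hlam : 0 < lam) (hf : 0 ≤ f) (hSbar : 0 ≤ Sbar)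
    (hr : 0 < r) (hK : ∀ j : Fin N, Nc ≤ (j : ℕ) → K j ≤ fOSP j) :
    ConvexOn ℝ (S0 Nc lam c z r f fOSP K) (Dfun Nc lam c z r f Sbar fOSP w K) := by
  have hS := convex_S0 Nc lam c z r f fOSP K
  have hG := (convexOn_Gfun hlam hf).subset (fun α hα => hα.2.2.1) hS
  have hH := (convexOn_Hfun hlam.le hSbar hr).subset (fun α hα => hα.2.2.2.1) hS
  have hedge := convexOn_finset_sum hS (univ.filter fun j : Fin N => Nc ≤ (j : ℕ)) fun j hj =>
    have hj : Nc ≤ (j : ℕ) := (Finset.mem_filter.mp hj).2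
    (convexOn_div_sub_apply j hlam (hK j hj)).subset (fun α hα => hα.2.2.2.2 j hj) hS
  have hcloud := convexOn_sum_coord_mul hS (univ.filter fun j : Fin N => (j : ℕ) < Nc)
    fun j => c / fOSP j
  refine ((((hG.add hH).add (convexOn_sum_coord_mul hS univ w)).add hcloud).add hedge).congr
    fun α _ => ?_
  simp only [Dfun, Pi.add_apply, mul_div_assoc]

theorem convexOn_Efun {εloc εtx : ℝ} (hlam : 0 < lam) (hf : 0 ≤ f) (hSbar : 0 ≤ Sbar)
    (hr : 0 < r) (hεloc : 0 ≤ εloc) (hεtx : 0 ≤ εtx) :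
    ConvexOn ℝ (S0 Nc lam c z r f fOSP K) (Efun lam c z r f Sbar εloc εtx) := by
  have hS := convex_S0 Nc lam c z r f fOSP K
  have hG := (convexOn_Gfun hlam hf).subset (fun α hα => hα.2.2.1) hS
  have hH := (convexOn_Hfun hlam.le hSbar hr).subset (fun α hα => hα.2.2.2.1) hS
  exact ((hG.smul hεloc).add (hH.smul hεtx)).congr fun α _ => rfl

end Offloading

theorem disutility_convexOn_general (N Nc : ℕ)
    (lam c z r f Sbar : ℝ) (hlam : 0 < lam) (hr : 0 < r)
    (hf : 0 < f) (hSbar : 0 < Sbar)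
    (εloc εtx : ℝ) (hεloc : 0 ≤ εloc) (hεtx : 0 ≤ εtx)
    (fOSP w K price : Fin N → ℝ)
    (hK : ∀ j : Fin N, Nc ≤ (j : ℕ) → 0 ≤ K j ∧ K j < fOSP j)
    (θD θE θP : ℝ) (hθD : 0 ≤ θD) (hθE : 0 ≤ θE) (hθP : 0 ≤ θP)
    (DMAX EMAX PMAX : ℝ) (hDMAX : 0 < DMAX) (hEMAX : 0 < EMAX) (hPMAX : 0 < PMAX) :
    ConvexOn ℝ (S0 Nc lam c z r f fOSP K)
      (Ufun Nc lam c z r f Sbar εloc εtx fOSP w K price θD θE θP DMAX EMAX PMAX) := by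
  have hS := convex_S0 Nc lam c z r f fOSP K
  refine ((((convexOn_Dfun w hlam hf.le hSbar.le hr fun j hj => (hK j hj).2.le).smul
    (div_nonneg hθD hDMAX.le)).add
    ((convexOn_Efun hlam hf.le hSbar.le hr hεloc hεtx).smul (div_nonneg hθE hEMAX.le))).add
    ((convexOn_Pfun lam c hS price).smul (div_nonneg hθP hPMAX.le))).congr fun α _ => ?_
  simp only [Ufun, Pi.add_apply, smul_eq_mul]
  ring

/-- The disutility function `U` is convex on the basic feasible set `S₀`. -/
theorem disutility_convexOn (N Nc : ℕ) (hN : 1 ≤ N) (hNc : Nc ≤ N)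
    (lam c z r f Sbar : ℝ) (hlam : 0 < lam) (hc : 0 < c) (hz : 0 < z) (hr : 0 < r)
    (hf : 0 < f) (hSbar : 0 < Sbar)
    (εloc εtx : ℝ) (hεloc : 0 ≤ εloc) (hεtx : 0 ≤ εtx)
    (fOSP w K price : Fin N → ℝ)
    (hfOSP : ∀ j, 0 < fOSP j) (hw : ∀ j, 0 ≤ w j) (hprice : ∀ j, 0 ≤ price j)
    (hK : ∀ j : Fin N, Nc ≤ (j : ℕ) → 0 ≤ K j ∧ K j < fOSP j)
    (θD θE θP : ℝ) (hθD : 0 ≤ θD) (hθE : 0 ≤ θE) (hθP : 0 ≤ θP)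
    (DMAX EMAX PMAX : ℝ) (hDMAX : 0 < DMAX) (hEMAX : 0 < EMAX) (hPMAX : 0 < PMAX) :
    ConvexOn ℝ (S0 Nc lam c z r f fOSP K)
      (Ufun Nc lam c z r f Sbar εloc εtx fOSP w K price θD θE θP DMAX EMAX PMAX) :=
  disutility_convexOn_general N Nc lam c z r f Sbar hlam hr hf hSbar εloc εtx hεloc hεtx fOSP w K
    price hK θD θE θP hθD hθE hθP DMAX EMAX PMAX hDMAX hEMAX hPMAX

end
end

section
/- The expected wireless transmission delay contribution is strictly convex in the total offloading fraction: the function H(s) = s·(λ·S̄·s/(2·(1 - λ·z·s/r)) + z/r) is strictly convex on the set T = {s ∈ ℝ : 0 ≤ s and λ·z·s < r}. -/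
/-! Writing `a = λz/r`, the identity `s²/(1 - a s) = ((1 - a s)⁻¹ - 1 - a s)/a²` exhibits
`H(s) = (λS̄/2)·s²/(1 - a s) + (z/r)·s` as a positive multiple of the strictly convex function
`(1 - a s)⁻¹` plus an affine function. -/

open Set

theorem StrictConvexOn.const_mul {E : Type*} [AddCommMonoid E] [Module ℝ E] {s : Set E}
    {f : E → ℝ} {c : ℝ} (hf : StrictConvexOn ℝ s f) (hc : 0 < c) :
    StrictConvexOn ℝ s fun x => c * f x := by
  refine ⟨hf.1, fun x hx y hy hxy a b ha hb hab => ?_⟩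
  have := mul_lt_mul_of_pos_left (hf.2 hx hy hxy ha hb hab) hc
  simp only [smul_eq_mul] at this ⊢
  linarith

theorem StrictConvexOn.comp_sub_mul {t : Set ℝ} {g : ℝ → ℝ} (hg : StrictConvexOn ℝ t g)
    (c : ℝ) {m : ℝ} (hm : m ≠ 0) :
    StrictConvexOn ℝ ((fun x => c - m * x) ⁻¹' t) fun x => g (c - m * x) := by
  have affine : ∀ x y a b : ℝ, a + b = 1 →
      c - m * (a • x + b • y) = a • (c - m * x) + b • (c - m * y) := by
    intro x y a b hab
    simp only [smul_eq_mul]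
    linear_combination c * hab.symm
  refine ⟨fun x hx y hy a b ha hb hab => ?_, fun x hx y hy hxy a b ha hb hab => ?_⟩
  · rw [mem_preimage, affine x y a b hab]
    exact hg.1 hx hy ha hb hab
  · beta_reduce
    rw [affine x y a b hab]
    refine hg.2 hx hy ?_ ha hb hab
    intro h
    exact hxy (mul_left_cancel₀ hm (sub_right_injective h))

theorem strictConvexOn_inv_one_sub_mul {a : ℝ} (ha : a ≠ 0) :
    StrictConvexOn ℝ {x | a * x < 1} fun x => (1 - a * x)⁻¹ := by
  have hinv : StrictConvexOn ℝ (Ioi 0) fun x : ℝ => x⁻¹ := by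
    simpa using strictConvexOn_zpow (m := -1) (by decide) (by decide)
  convert hinv.comp_sub_mul 1 ha using 1
  ext x
  simp [sub_pos]

theorem sq_div_one_sub_mul {a x : ℝ} (ha : a ≠ 0) (hx : 1 - a * x ≠ 0) :
    x ^ 2 / (1 - a * x) = (a ^ 2)⁻¹ * (1 - a * x)⁻¹ + -a⁻¹ * x + -(a ^ 2)⁻¹ := by
  rw [div_eq_iff hx, add_mul, add_mul, mul_assoc, inv_mul_cancel₀ hx]
  field_simp
  ring

theorem strictConvexOn_sq_div_one_sub_mul {a : ℝ} (ha : a ≠ 0) :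
    StrictConvexOn ℝ {x | a * x < 1} fun x => x ^ 2 / (1 - a * x) := by
  have hconv : Convex ℝ {x | a * x < 1} :=
    convex_halfSpace_lt (LinearMap.mul ℝ ℝ a).isLinear 1
  have hinv := (strictConvexOn_inv_one_sub_mul ha).const_mul (inv_pos.2 (sq_pos_of_ne_zero ha))
  refine ((hinv.add_convexOn ((LinearMap.mul ℝ ℝ (-a⁻¹)).convexOn hconv)).add_const
    (-(a ^ 2)⁻¹)).congr fun x hx => ?_
  simp only [Pi.add_apply, LinearMap.mul_apply']
  exact (sq_div_one_sub_mul ha (sub_ne_zero.2 (ne_of_gt hx))).symm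

/-- The wireless transmission delay contribution
`H(s) = s·(λ·S̄·s/(2·(1 - λ·z·s/r)) + z/r)` is strictly convex on
`T = {s : 0 ≤ s, λ·z·s < r}`. -/
theorem wirelessDelay_strictConvexOn (lam z r Sbar : ℝ)
    (hlam : 0 < lam) (hz : 0 < z) (hr : 0 < r) (hSbar : 0 < Sbar) :
    StrictConvexOn ℝ {s : ℝ | 0 ≤ s ∧ lam * z * s < r}
      (fun s : ℝ => s * (lam * Sbar * s / (2 * (1 - lam * z * s / r)) + z / r)) := by
  set a := lam * z / r with ha_def
  have ha : 0 < a := by positivity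
  have hconv : Convex ℝ {s : ℝ | 0 ≤ s ∧ lam * z * s < r} :=
    (convex_Ici 0).inter (convex_halfSpace_lt (LinearMap.mul ℝ ℝ (lam * z)).isLinear r)
  have hsub : {s : ℝ | 0 ≤ s ∧ lam * z * s < r} ⊆ {s | a * s < 1} := fun s hs => by
    rw [mem_ofPred_eq, ha_def, div_mul_eq_mul_div, div_lt_one hr]
    exact hs.2
  refine ((((strictConvexOn_sq_div_one_sub_mul ha.ne').subset hsub hconv).const_mul
    (by positivity : 0 < lam * Sbar / 2)).add_convexOn
    ((LinearMap.mul ℝ ℝ (z / r)).convexOn hconv)).congr fun s _ => ?_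
  simp only [Pi.add_apply, LinearMap.mul_apply']
  rw [show 1 - lam * z * s / r = 1 - a * s by rw [ha_def]; ring, div_mul_eq_div_div_swap]
  ring
end

section
/- Equivalence of Nash equilibria and variational-inequality solutions for convex games (Theorem 2): let H be a real inner product space, M a positive integer, and for each player i ∈ Fin M let S i ⊆ H be a convex set and U i : (Fin M → H) → ℝ a payoff. Suppose for every feasible profile x (x i ∈ S i for all i) and every player i, the section y ↦ U i (Function.update x i y) is convex on S i and has gradient F i x at x i. Then a feasible profile x* is a Nash equilibrium (for every i and every y ∈ S i, U i x* ≤ U i (Function.update x* i y)) if and only if x* solves the variational inequality: for every feasible profile z, Σ_{i} ⟪F i x*, z i - x* i⟫ ≥ 0. -/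
open scoped RealInnerProductSpace

/-! A Nash equilibrium means that each `x* i` minimises the convex section
`y ↦ U i (update x* i y)` over `S i`. For a differentiable convex function on a convex set,
minimality is equivalent to the first-order condition `0 ≤ ⟪∇f x, y - x⟫` for all feasible `y`
(Fermat's rule one way, the gradient inequality `f x + ⟪∇f x, y - x⟫ ≤ f y` the other).
Summing these conditions gives the variational inequality; conversely, testing it on
`update x* i y` isolates player `i`. -/

section Gradient

variable {H : Type*} [NormedAddCommGroup H] [InnerProductSpace ℝ H] [CompleteSpace H]
  {f : H → ℝ} {s : Set H} {g x y : H}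

theorem IsMinOn.inner_gradient_nonneg (hmin : IsMinOn f s x) (hs : Convex ℝ s)
    (hg : HasGradientAt f g x) (hx : x ∈ s) (hy : y ∈ s) : 0 ≤ ⟪g, y - x⟫ := by
  simpa using hmin.localize.hasFDerivWithinAt_nonneg hg.hasFDerivAt.hasFDerivWithinAt
    (sub_mem_posTangentConeAt_of_segment_subset (hs.segment_subset hx hy))

theorem ConvexOn.inner_gradient_le_sub (hf : ConvexOn ℝ s f) (hg : HasGradientAt f g x)
    (hx : x ∈ s) (hy : y ∈ s) : ⟪g, y - x⟫ ≤ f y - f x := by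
  have hline : HasDerivAt (f ∘ AffineMap.lineMap (k := ℝ) x y) ⟪g, y - x⟫ 0 := by
    have hg' : HasFDerivAt f (InnerProductSpace.toDual ℝ H g)
        (AffineMap.lineMap x y (0 : ℝ)) := by
      simpa using hg.hasFDerivAt
    simpa using hg'.comp_hasDerivAt (0 : ℝ) AffineMap.hasDerivAt_lineMap
  simpa [slope_def_field] using (hf.comp_affineMap (AffineMap.lineMap x y)).le_slope_of_hasDerivAt
    (by simpa using hx) (by simpa using hy) zero_lt_one hline

theorem ConvexOn.isMinOn_iff_inner_gradient_nonneg (hf : ConvexOn ℝ s f)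
    (hg : HasGradientAt f g x) (hx : x ∈ s) :
    IsMinOn f s x ↔ ∀ y ∈ s, 0 ≤ ⟪g, y - x⟫ :=
  ⟨fun hmin _ hy => hmin.inner_gradient_nonneg hf.1 hg hx hy,
    fun h y hy => sub_nonneg.mp ((h y hy).trans (hf.inner_gradient_le_sub hg hx hy))⟩

end Gradient

theorem forall_sum_nonneg_iff_forall_nonneg {ι : Type*} [Fintype ι] [DecidableEq ι]
    {α : ι → Type*} {S : ∀ i, Set (α i)} {φ : ∀ i, α i → ℝ} {x : ∀ i, α i}
    (hx : ∀ i, x i ∈ S i) (hφ : ∀ i, φ i (x i) = 0) :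
    (∀ z : ∀ i, α i, (∀ i, z i ∈ S i) → 0 ≤ ∑ i, φ i (z i)) ↔ ∀ i, ∀ y ∈ S i, 0 ≤ φ i y := by
  refine ⟨fun h i y hy => ?_, fun h z hz => Finset.sum_nonneg fun i _ => h i (z i) (hz i)⟩
  have hupdate : ∀ j, Function.update x i y j ∈ S j := by
    simpa [Set.mem_univ_pi] using
      (Set.update_mem_pi_iff_of_mem (Set.mem_univ_pi.mpr hx)).mpr fun _ => hy
  have hsum : ∑ j, φ j (Function.update x i y j) = φ i y := by
    rw [Finset.sum_eq_single_of_mem i (Finset.mem_univ i) fun j _ hj => by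
      rw [Function.update_of_ne hj, hφ]]
    rw [Function.update_self]
  simpa [hsum] using h _ hupdate

theorem nash_iff_variational_inequality_general
    {H : Type*} [NormedAddCommGroup H] [InnerProductSpace ℝ H] [CompleteSpace H]
    (M : ℕ) (S : Fin M → Set H)
    (U : Fin M → (Fin M → H) → ℝ) (F : Fin M → (Fin M → H) → H)
    (hconv : ∀ x : Fin M → H, (∀ i, x i ∈ S i) → ∀ i,
      ConvexOn ℝ (S i) (fun y => U i (Function.update x i y)))
    (hgrad : ∀ x : Fin M → H, (∀ i, x i ∈ S i) → ∀ i,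
      HasGradientAt (fun y => U i (Function.update x i y)) (F i x) (x i))
    (xs : Fin M → H) (hxs : ∀ i, xs i ∈ S i) :
    (∀ i, ∀ y ∈ S i, U i xs ≤ U i (Function.update xs i y)) ↔
      (∀ z : Fin M → H, (∀ i, z i ∈ S i) → 0 ≤ ∑ i, ⟪F i xs, z i - xs i⟫) := by
  calc (∀ i, ∀ y ∈ S i, U i xs ≤ U i (Function.update xs i y))
      ↔ ∀ i, IsMinOn (fun y => U i (Function.update xs i y)) (S i) (xs i) := by
        simp only [isMinOn_iff, Function.update_eq_self]
    _ ↔ ∀ i, ∀ y ∈ S i, 0 ≤ ⟪F i xs, y - xs i⟫ := forall_congr' fun i =>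
        (hconv xs hxs i).isMinOn_iff_inner_gradient_nonneg (hgrad xs hxs i) (hxs i)
    _ ↔ _ := (forall_sum_nonneg_iff_forall_nonneg hxs (by simp)).symm

/-- Equivalence of Nash equilibria and variational-inequality solutions for convex
games: a feasible profile `x*` is a Nash equilibrium iff it solves the variational
inequality `Σ_i ⟪F i x*, z i - x* i⟫ ≥ 0` for every feasible profile `z`. -/
theorem nash_iff_variational_inequality
    {H : Type*} [NormedAddCommGroup H] [InnerProductSpace ℝ H] [CompleteSpace H]
    (M : ℕ) (hM : 0 < M) (S : Fin M → Set H) (hS : ∀ i, Convex ℝ (S i))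
    (U : Fin M → (Fin M → H) → ℝ) (F : Fin M → (Fin M → H) → H)
    (hconv : ∀ x : Fin M → H, (∀ i, x i ∈ S i) → ∀ i,
      ConvexOn ℝ (S i) (fun y => U i (Function.update x i y)))
    (hgrad : ∀ x : Fin M → H, (∀ i, x i ∈ S i) → ∀ i,
      HasGradientAt (fun y => U i (Function.update x i y)) (F i x) (x i))
    (xs : Fin M → H) (hxs : ∀ i, xs i ∈ S i) :
    (∀ i, ∀ y ∈ S i, U i xs ≤ U i (Function.update xs i y)) ↔
      (∀ z : Fin M → H, (∀ i, z i ∈ S i) → 0 ≤ ∑ i, ⟪F i xs, z i - xs i⟫) :=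
  nash_iff_variational_inequality_general M S U F hconv hgrad xs hxs
end
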